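/- Let f : ℝⁿ → ℝ be differentiable with ∇f Lipschitz continuous on ℝⁿ with constant L(f) for the Euclidean norm, and strongly convex on ℝⁿ with constant of strong convexity α > 0 with respect to the Euclidean norm. Let A be a q × n real matrix whose rows are linearly independent, and b ∈ ℝ^q. Then the dual function θ(λ) = inf_{x ∈ ℝⁿ} [ f(x) + λᵀ(Ax − b) ] is finite-valued, differentiable and strongly concave on ℝ^q with constant of strong concavity α·λ_min(AAᵀ)/L(f)² with respect to the Euclidean norm. -/

import Mathlib

open scoped Matrix

/-!
For each multiplier `μ` the Lagrangian `x ↦ f x + ⟪μ, A x - b⟫` is `α`-strongly convex, so it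
attains its minimum at some `z μ`, where `∇f (z μ) = -Aᵀ μ`; hence `θ μ` is finite. Comparing the
minima at `μ` and `ν` through `z μ` and `z ν`, and using that strong monotonicity of `∇f` makes
`z` Lipschitz, squeezes `θ ν - θ μ - ⟪A (z μ) - b, ν - μ⟫` between `-‖Aᵀ‖² ‖ν - μ‖² / α` and `0`,
so `∇θ μ = A (z μ) - b`.

For concavity, put `μ = t μ₁ + (1 - t) μ₂` and `x = z μ`. The Lagrangian at `μᵢ` has gradient
`Aᵀ (μᵢ - μ)` at `x`, so by the descent lemma for the `L`-Lipschitz gradient its minimum `θ μᵢ`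
lies at least `‖Aᵀ (μᵢ - μ)‖² / (2L)` below its value at `x`. Since the Lagrangian is affine in
the multiplier, averaging gives
`t θ μ₁ + (1 - t) θ μ₂ + t (1 - t) ‖Aᵀ (μ₁ - μ₂)‖² / (2L) ≤ θ μ`, and
`λ_min(AAᵀ) ‖w‖² ≤ ‖Aᵀ w‖²` together with `α ≤ L` gives the constant `α λ_min(AAᵀ) / L²`.
-/

noncomputable def lambdaMin {q : ℕ} (M : Matrix (Fin q) (Fin q) ℝ)
    (hM : M.IsHermitian) : ℝ := ⨅ i, hM.eigenvalues i

open Set Filter Topology InnerProductSpace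
open scoped RealInnerProductSpace InnerProduct

theorem strongConvexOn_univ_of_forall {E : Type*} [NormedAddCommGroup E] [NormedSpace ℝ E]
    {g : E → ℝ} {m : ℝ}
    (h : ∀ x y : E, ∀ t : ℝ, 0 ≤ t → t ≤ 1 →
      g (t • x + (1 - t) • y) ≤ t * g x + (1 - t) * g y - m * (t * (1 - t)) / 2 * ‖y - x‖ ^ 2) :
    StrongConvexOn univ m g := by
  refine ⟨convex_univ, fun x _ y _ s r hs hr hsr => ?_⟩
  obtain rfl : r = 1 - s := eq_sub_of_add_eq' hsr
  have := h x y s hs (sub_nonneg.1 hr)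
  rw [norm_sub_rev] at this
  simp only [smul_eq_mul]
  linarith

section Smooth

variable {E : Type*} [NormedAddCommGroup E] [InnerProductSpace ℝ E] [CompleteSpace E]
  {g : E → ℝ} {g' : E → E} {d : E} {m L : ℝ}

theorem HasGradientAt.hasDerivAt_comp_add_smul {x v : E} {t : ℝ}
    (h : HasGradientAt g d (x + t • v)) :
    HasDerivAt (fun s : ℝ => g (x + s • v)) ⟪d, v⟫ t := by
  have := h.hasFDerivAt.comp_hasDerivAt t (((hasDerivAt_id t).smul_const v).const_add x)
  simpa [Function.comp_def] using this

theorem StrongConvexOn.add_inner_add_sq_le (hg : StrongConvexOn univ m g) {y : E}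
    (hd : HasGradientAt g d y) (x : E) :
    g y + ⟪d, x - y⟫ + m / 2 * ‖x - y‖ ^ 2 ≤ g x := by
  set v := x - y
  have hderiv : HasDerivAt (fun t : ℝ => g (y + t • v)) ⟪d, v⟫ 0 :=
    HasGradientAt.hasDerivAt_comp_add_smul (by simpa using hd)
  have hslope := hderiv.tendsto_slope_zero_right
  have hlim : Tendsto (fun t : ℝ => g x - g y - (1 - t) * (m / 2 * ‖v‖ ^ 2)) (𝓝[>] 0)
      (𝓝 (g x - g y - m / 2 * ‖v‖ ^ 2)) := by
    have hcont : Continuous fun t : ℝ => g x - g y - (1 - t) * (m / 2 * ‖v‖ ^ 2) := by fun_prop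
    simpa using (hcont.tendsto 0).mono_left nhdsWithin_le_nhds
  have hle : ⟪d, v⟫ ≤ g x - g y - m / 2 * ‖v‖ ^ 2 := by
    refine le_of_tendsto_of_tendsto hslope hlim ?_
    filter_upwards [Ioc_mem_nhdsGT one_pos] with t ⟨ht0, ht1⟩
    have hconv := hg.2 (mem_univ x) (mem_univ y) ht0.le (sub_nonneg.2 ht1) (add_sub_cancel t 1)
    have hpt : t • x + (1 - t) • y = y + t • v := by simp only [v]; module
    rw [hpt, smul_eq_mul, smul_eq_mul] at hconv
    rw [zero_add, smul_eq_mul, inv_mul_le_iff₀ ht0]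
    simp only [zero_smul, add_zero]
    nlinarith
  linarith

theorem StrongConvexOn.mul_sq_norm_sub_le_inner (hg : StrongConvexOn univ m g)
    (hg' : ∀ x, HasGradientAt g (g' x) x) (x y : E) :
    m * ‖x - y‖ ^ 2 ≤ ⟪g' x - g' y, x - y⟫ := by
  have hxy := hg.add_inner_add_sq_le (hg' y) x
  have hyx := hg.add_inner_add_sq_le (hg' x) y
  rw [← neg_sub x y, inner_neg_right, norm_neg] at hyx
  rw [inner_sub_left]
  linarith

theorem StrongConvexOn.mul_norm_sub_le_norm_sub (hg : StrongConvexOn univ m g)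
    (hg' : ∀ x, HasGradientAt g (g' x) x) (x y : E) :
    m * ‖x - y‖ ≤ ‖g' x - g' y‖ := by
  rcases (norm_nonneg (x - y)).eq_or_lt with h | h
  · rw [← h, mul_zero]
    exact norm_nonneg _
  · refine le_of_mul_le_mul_right ?_ h
    calc m * ‖x - y‖ * ‖x - y‖ = m * ‖x - y‖ ^ 2 := by ring
      _ ≤ ⟪g' x - g' y, x - y⟫ := hg.mul_sq_norm_sub_le_inner hg' x y
      _ ≤ ‖g' x - g' y‖ * ‖x - y‖ := real_inner_le_norm _ _

theorem StrongConvexOn.exists_forall_le [ProperSpace E] (hg : StrongConvexOn univ m g)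
    (hm : 0 < m) (hc : Continuous g) (hd : HasGradientAt g d 0) :
    ∃ z, ∀ x, g z ≤ g x := by
  refine hc.exists_forall_le' 0 ?_
  filter_upwards [tendsto_norm_cocompact_atTop.eventually (eventually_ge_atTop (2 * ‖d‖ / m))]
    with x hx
  have hlower := hg.add_inner_add_sq_le hd x
  rw [sub_zero] at hlower
  have hinner : -(‖d‖ * ‖x‖) ≤ ⟪d, x⟫ := neg_le_of_abs_le (abs_real_inner_le_norm d x)
  have hgrowth : ‖d‖ * ‖x‖ ≤ m / 2 * ‖x‖ ^ 2 := by
    rw [div_le_iff₀ hm] at hx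
    nlinarith [norm_nonneg x]
  linarith

theorem le_add_inner_add_sq_of_lipschitz_gradient (hg' : ∀ x, HasGradientAt g (g' x) x)
    (hLip : ∀ x y, ‖g' y - g' x‖ ≤ L * ‖y - x‖) (x y : E) :
    g x ≤ g y + ⟪g' y, x - y⟫ + L / 2 * ‖x - y‖ ^ 2 := by
  set v := x - y
  let φ : ℝ → ℝ := fun t => g (y + t • v) - t * ⟪g' y, v⟫ - L / 2 * t ^ 2 * ‖v‖ ^ 2
  have hφ : ∀ t, HasDerivAt φ (⟪g' (y + t • v), v⟫ - ⟪g' y, v⟫ - L * t * ‖v‖ ^ 2) t := by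
    intro t
    refine ((((hg' (y + t • v)).hasDerivAt_comp_add_smul).sub
      ((hasDerivAt_id t).mul_const ⟪g' y, v⟫)).sub
      (((hasDerivAt_pow 2 t).const_mul (L / 2)).mul_const (‖v‖ ^ 2))).congr_deriv ?_
    simp only [Nat.cast_ofNat, Nat.add_one_sub_one, pow_one]
    ring
  have hanti : AntitoneOn φ (Ici 0) := by
    refine antitoneOn_of_hasDerivWithinAt_nonpos (convex_Ici 0)
      (fun t _ => (hφ t).continuousAt.continuousWithinAt) (fun t _ => (hφ t).hasDerivWithinAt) ?_
    intro t ht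
    rw [interior_Ici] at ht
    have hgap : ‖g' (y + t • v) - g' y‖ ≤ L * (t * ‖v‖) := by
      simpa [norm_smul, abs_of_pos (mem_Ioi.1 ht)] using hLip y (y + t • v)
    have := real_inner_le_norm (g' (y + t • v) - g' y) v
    rw [inner_sub_left] at this
    nlinarith [norm_nonneg v]
  have := hanti self_mem_Ici (zero_le_one' ℝ) zero_le_one
  simp only [φ, zero_smul, add_zero, one_smul, zero_mul, sub_zero, one_pow, one_mul, v,
    add_sub_cancel] at this
  linarith

theorem le_sub_sq_norm_gradient_div_of_forall_le (hg' : ∀ x, HasGradientAt g (g' x) x)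
    (hLip : ∀ x y, ‖g' y - g' x‖ ≤ L * ‖y - x‖) (hL : 0 < L) {z : E} (hz : ∀ x, g z ≤ g x)
    (x : E) : g z ≤ g x - ‖g' x‖ ^ 2 / (2 * L) := by
  have hdescent := le_add_inner_add_sq_of_lipschitz_gradient hg' hLip (x - L⁻¹ • g' x) x
  rw [sub_sub_cancel_left, inner_neg_right, real_inner_smul_right, real_inner_self_eq_norm_sq,
    norm_neg, norm_smul, Real.norm_eq_abs, abs_inv, abs_of_pos hL] at hdescent
  calc g z ≤ g (x - L⁻¹ • g' x) := hz _
    _ ≤ _ := hdescent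
    _ = g x - ‖g' x‖ ^ 2 / (2 * L) := by field_simp; ring

theorem IsLocalMin.hasGradientAt_eq_zero {x : E} (h : IsLocalMin g x) (hd : HasGradientAt g d x) :
    d = 0 :=
  (toDual ℝ E).injective <| by rw [h.hasFDerivAt_eq_zero hd.hasFDerivAt, map_zero]

theorem hasGradientAt_of_abs_sub_sub_inner_le {x : E} (C : ℝ)
    (h : ∀ y, |g y - g x - ⟪d, y - x⟫| ≤ C * ‖y - x‖ ^ 2) : HasGradientAt g d x := by
  rw [hasGradientAt_iff_isLittleO_nhds_zero]
  refine Asymptotics.IsBigO.trans_isLittleO ?_ (Asymptotics.isLittleO_norm_pow_id one_lt_two)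
  refine Asymptotics.IsBigO.of_bound C (Eventually.of_forall fun h' => ?_)
  simpa [Real.norm_eq_abs, abs_of_nonneg (sq_nonneg ‖h'‖)] using h (x + h')

end Smooth

section Lagrangian

variable {E F : Type*} [NormedAddCommGroup E] [InnerProductSpace ℝ E]
  [NormedAddCommGroup F] [InnerProductSpace ℝ F]
  {f : E → ℝ} {f' : E → E} {A : E →L[ℝ] F} {b : F} {α L : ℝ}

def lagrangian (f : E → ℝ) (A : E →L[ℝ] F) (b : F) (μ : F) (x : E) : ℝ :=
  f x + ⟪μ, A x - b⟫

theorem lagrangian_eq_add_inner (μ ν : F) (x : E) :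
    lagrangian f A b ν x = lagrangian f A b μ x + ⟪ν - μ, A x - b⟫ := by
  simp only [lagrangian, inner_sub_left]
  ring

theorem StrongConvexOn.lagrangian (hf : StrongConvexOn univ α f) (μ : F) :
    StrongConvexOn univ α (lagrangian f A b μ) := by
  have haff : ConvexOn ℝ univ fun x => ⟪μ, A x - b⟫ := by
    have hrw : (fun x => ⟪μ, A x - b⟫) = fun x => (innerSL ℝ μ ∘L A).toLinearMap x + -⟪μ, b⟫ := by
      ext x
      simp [inner_sub_right, ← sub_eq_add_neg]
    rw [hrw]
    exact (LinearMap.convexOn _ convex_univ).add_const _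
  have h := hf.add (uniformConvexOn_zero.2 haff)
  rwa [add_zero] at h

variable [CompleteSpace E] [CompleteSpace F]

theorem hasGradientAt_lagrangian {d x : E} (hd : HasGradientAt f d x) (μ : F) :
    HasGradientAt (lagrangian f A b μ) (d + (A†) μ) x := by
  have hlin : HasFDerivAt (fun y => ⟪μ, A y - b⟫) (toDual ℝ E ((A†) μ)) x := by
    have : (fun y => ⟪μ, A y - b⟫) = fun y => toDual ℝ E ((A†) μ) y - ⟪μ, b⟫ := by
      ext y
      rw [toDual_apply_apply, ContinuousLinearMap.adjoint_inner_left, inner_sub_right]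
    rw [this]
    exact (toDual ℝ E ((A†) μ)).hasFDerivAt.sub_const _
  rw [hasGradientAt_iff_hasFDerivAt, map_add]
  exact hd.hasFDerivAt.add hlin

theorem exists_forall_lagrangian_le [ProperSpace E] (hα : 0 < α)
    (hf : StrongConvexOn univ α f) (hf' : ∀ x, HasGradientAt f (f' x) x) (μ : F) :
    ∃ z, ∀ x, lagrangian f A b μ z ≤ lagrangian f A b μ x :=
  (hf.lagrangian μ).exists_forall_le hα
    (Differentiable.continuous fun x => (hasGradientAt_lagrangian (hf' x) μ).differentiableAt)
    (hasGradientAt_lagrangian (hf' 0) μ)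

theorem gradient_eq_neg_adjoint_of_forall_lagrangian_le {μ : F} {z d : E}
    (hz : ∀ x, lagrangian f A b μ z ≤ lagrangian f A b μ x) (hd : HasGradientAt f d z) :
    d = -(A†) μ :=
  eq_neg_of_add_eq_zero_left <|
    IsLocalMin.hasGradientAt_eq_zero (Eventually.of_forall hz) (hasGradientAt_lagrangian hd μ)

theorem abs_lagrangian_min_sub_sub_inner_le (hα : 0 < α) (hf : StrongConvexOn univ α f)
    (hf' : ∀ x, HasGradientAt f (f' x) x) {μ ν : F} {zμ zν : E}
    (hzμ : ∀ x, lagrangian f A b μ zμ ≤ lagrangian f A b μ x)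
    (hzν : ∀ x, lagrangian f A b ν zν ≤ lagrangian f A b ν x) :
    |lagrangian f A b ν zν - lagrangian f A b μ zμ - ⟪A zμ - b, ν - μ⟫|
      ≤ ‖A†‖ ^ 2 / α * ‖ν - μ‖ ^ 2 := by
  have hgrad : f' zν - f' zμ = -(A†) (ν - μ) := by
    rw [gradient_eq_neg_adjoint_of_forall_lagrangian_le hzν (hf' zν),
      gradient_eq_neg_adjoint_of_forall_lagrangian_le hzμ (hf' zμ), map_sub]
    abel
  have hmove : α * ‖zν - zμ‖ ≤ ‖(A†) (ν - μ)‖ := by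
    have := hf.mul_norm_sub_le_norm_sub hf' zν zμ
    rwa [hgrad, norm_neg] at this
  have hcross : -(‖(A†) (ν - μ)‖ ^ 2 / α) ≤ ⟪ν - μ, A zν - b⟫ - ⟪ν - μ, A zμ - b⟫ := by
    rw [← inner_sub_right, sub_sub_sub_cancel_right, ← map_sub,
      ← ContinuousLinearMap.adjoint_inner_left]
    have hle : ‖zν - zμ‖ ≤ ‖(A†) (ν - μ)‖ / α := by rwa [le_div_iff₀' hα]
    calc -(‖(A†) (ν - μ)‖ ^ 2 / α) = -(‖(A†) (ν - μ)‖ * (‖(A†) (ν - μ)‖ / α)) := by ring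
      _ ≤ -(‖(A†) (ν - μ)‖ * ‖zν - zμ‖) := by gcongr
      _ ≤ _ := neg_le_of_abs_le (abs_real_inner_le_norm _ _)
  have hop : ‖(A†) (ν - μ)‖ ^ 2 / α ≤ ‖A†‖ ^ 2 / α * ‖ν - μ‖ ^ 2 := by
    rw [div_mul_eq_mul_div, ← mul_pow]
    gcongr
    exact (A†).le_opNorm _
  have hshiftν := lagrangian_eq_add_inner (f := f) (A := A) (b := b) μ ν zν
  have hshiftμ := lagrangian_eq_add_inner (f := f) (A := A) (b := b) μ ν zμ
  rw [real_inner_comm, abs_le]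
  constructor
  · linarith [hzμ zν]
  · have : 0 ≤ ‖A†‖ ^ 2 / α * ‖ν - μ‖ ^ 2 := by positivity
    linarith [hzν zμ]

theorem hasGradientAt_lagrangian_min (hα : 0 < α) (hf : StrongConvexOn univ α f)
    (hf' : ∀ x, HasGradientAt f (f' x) x) {z : F → E}
    (hz : ∀ μ x, lagrangian f A b μ (z μ) ≤ lagrangian f A b μ x) (μ : F) :
    HasGradientAt (fun ν => lagrangian f A b ν (z ν)) (A (z μ) - b) μ :=
  hasGradientAt_of_abs_sub_sub_inner_le _ fun ν =>
    abs_lagrangian_min_sub_sub_inner_le hα hf hf' (hz μ) (hz ν)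

theorem lagrangian_min_add_sq_norm_adjoint_le (hf' : ∀ x, HasGradientAt f (f' x) x)
    (hLip : ∀ x y, ‖f' y - f' x‖ ≤ L * ‖y - x‖) (hL : 0 < L) {z : F → E}
    (hz : ∀ μ x, lagrangian f A b μ (z μ) ≤ lagrangian f A b μ x) (μ₁ μ₂ : F) {t : ℝ}
    (ht₀ : 0 ≤ t) (ht₁ : t ≤ 1) :
    t * lagrangian f A b μ₁ (z μ₁) + (1 - t) * lagrangian f A b μ₂ (z μ₂)
        + t * (1 - t) / (2 * L) * ‖(A†) (μ₁ - μ₂)‖ ^ 2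
      ≤ lagrangian f A b (t • μ₁ + (1 - t) • μ₂) (z (t • μ₁ + (1 - t) • μ₂)) := by
  set μ := t • μ₁ + (1 - t) • μ₂
  set x := z μ
  set v := (A†) (μ₁ - μ₂)
  have hfx : f' x = -(A†) μ := gradient_eq_neg_adjoint_of_forall_lagrangian_le (hz μ) (hf' x)
  have hdescent : ∀ ν, lagrangian f A b ν (z ν)
      ≤ lagrangian f A b ν x - ‖(A†) (ν - μ)‖ ^ 2 / (2 * L) := by
    intro ν
    have := le_sub_sq_norm_gradient_div_of_forall_le (fun y => hasGradientAt_lagrangian (hf' y) ν)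
      (fun y y' => by simpa only [add_sub_add_right_eq_sub] using hLip y y') hL (hz ν) x
    rwa [hfx, neg_add_eq_sub, ← map_sub] at this
  have h₁ := hdescent μ₁
  have h₂ := hdescent μ₂
  have hμ₁ : μ₁ - μ = (1 - t) • (μ₁ - μ₂) := by simp only [μ]; module
  have hμ₂ : μ₂ - μ = (-t) • (μ₁ - μ₂) := by simp only [μ]; module
  rw [hμ₁, map_smul, norm_smul, mul_pow, Real.norm_eq_abs, sq_abs] at h₁
  rw [hμ₂, map_smul, norm_smul, mul_pow, Real.norm_eq_abs, sq_abs] at h₂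
  have haffine : t * lagrangian f A b μ₁ x + (1 - t) * lagrangian f A b μ₂ x
      = lagrangian f A b μ x := by
    rw [lagrangian_eq_add_inner μ μ₁, lagrangian_eq_add_inner μ μ₂, hμ₁, hμ₂,
      real_inner_smul_left, real_inner_smul_left]
    ring
  linear_combination mul_le_mul_of_nonneg_left h₁ ht₀
    + mul_le_mul_of_nonneg_left h₂ (sub_nonneg.2 ht₁) + haffine

theorem lagrangian_min_add_sq_norm_sub_le (hα : 0 < α) (hf : StrongConvexOn univ α f)
    (hf' : ∀ x, HasGradientAt f (f' x) x) (hLip : ∀ x y, ‖f' y - f' x‖ ≤ L * ‖y - x‖)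
    (hL : 0 < L) {z : F → E} (hz : ∀ μ x, lagrangian f A b μ (z μ) ≤ lagrangian f A b μ x)
    {c : ℝ} (hc : ∀ w, c * ‖w‖ ^ 2 ≤ ‖(A†) w‖ ^ 2) (μ₁ μ₂ : F) {t : ℝ} (ht₀ : 0 ≤ t)
    (ht₁ : t ≤ 1) :
    t * lagrangian f A b μ₁ (z μ₁) + (1 - t) * lagrangian f A b μ₂ (z μ₂)
        + α * c / L ^ 2 * (t * (1 - t)) / 2 * ‖μ₁ - μ₂‖ ^ 2
      ≤ lagrangian f A b (t • μ₁ + (1 - t) • μ₂) (z (t • μ₁ + (1 - t) • μ₂)) := by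
  set v := (A†) (μ₁ - μ₂)
  have hαL : α * ‖v‖ ^ 2 ≤ L * ‖v‖ ^ 2 := by
    have h := (hf.mul_norm_sub_le_norm_sub hf' v 0).trans (hLip 0 v)
    rw [sub_zero] at h
    nlinarith [mul_le_mul_of_nonneg_right h (norm_nonneg v)]
  have hmodulus : α * c / L ^ 2 * ‖μ₁ - μ₂‖ ^ 2 ≤ ‖v‖ ^ 2 / L := by
    rw [div_mul_eq_mul_div, div_le_div_iff₀ (by positivity) hL]
    calc α * c * ‖μ₁ - μ₂‖ ^ 2 * L = L * (α * (c * ‖μ₁ - μ₂‖ ^ 2)) := by ring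
      _ ≤ L * (L * ‖v‖ ^ 2) :=
        mul_le_mul_of_nonneg_left ((mul_le_mul_of_nonneg_left (hc _) hα.le).trans hαL) hL.le
      _ = ‖v‖ ^ 2 * L ^ 2 := by ring
  have ht : 0 ≤ t * (1 - t) / 2 := by have := sub_nonneg.2 ht₁; positivity
  linear_combination lagrangian_min_add_sq_norm_adjoint_le hf' hLip hL hz μ₁ μ₂ ht₀ ht₁
    + mul_le_mul_of_nonneg_left hmodulus ht

end Lagrangian

theorem Matrix.IsHermitian.iInf_eigenvalues_mul_sq_norm_le {ι : Type*} [Fintype ι]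
    [DecidableEq ι] {M : Matrix ι ι ℝ} (hM : M.IsHermitian) (x : EuclideanSpace ℝ ι) :
    (⨅ i, hM.eigenvalues i) * ‖x‖ ^ 2 ≤ ⟪x, M.toEuclideanLin x⟫ := by
  set e := hM.eigenvectorBasis
  have heigen : ∀ i, ⟪e i, M.toEuclideanLin x⟫ = hM.eigenvalues i * ⟪e i, x⟫ := by
    intro i
    have hMe : M.toEuclideanLin (e i) = hM.eigenvalues i • e i := by
      ext j
      simpa using congrFun (hM.mulVec_eigenvectorBasis i) j
    rw [← (Matrix.isSymmetric_toEuclideanLin_iff.2 hM) (e i) x, hMe, real_inner_smul_left]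
  rw [← real_inner_self_eq_norm_sq, ← e.sum_inner_mul_inner x x, ← e.sum_inner_mul_inner x,
    Finset.mul_sum]
  refine Finset.sum_le_sum fun i _ => ?_
  rw [heigen, real_inner_comm x (e i)]
  have hmin : ⨅ j, hM.eigenvalues j ≤ hM.eigenvalues i := ciInf_le (Set.finite_range _).bddBelow i
  nlinarith [mul_le_mul_of_nonneg_right hmin (mul_self_nonneg ⟪e i, x⟫)]

theorem lambdaMin_mul_transpose_mul_sq_norm_le {n q : ℕ} (A : Matrix (Fin q) (Fin n) ℝ)
    (w : EuclideanSpace ℝ (Fin q)) :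
    lambdaMin (A * Aᵀ) (Matrix.isHermitian_mul_conjTranspose_self A) * ‖w‖ ^ 2 ≤
      ‖((Matrix.toEuclideanLin A).toContinuousLinearMap†) w‖ ^ 2 := by
  rw [← real_inner_self_eq_norm_sq (_ : EuclideanSpace ℝ (Fin n)),
    ContinuousLinearMap.adjoint_inner_left,
    ← LinearMap.adjoint_toContinuousLinearMap, ← Matrix.toEuclideanLin_conjTranspose_eq_adjoint]
  convert (Matrix.isHermitian_mul_conjTranspose_self A).iInf_eigenvalues_mul_sq_norm_le w using 2
  · rfl
  · simp [Matrix.toLpLin_apply, Matrix.mulVec_mulVec]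

theorem sum_mul_mulVec_sub_eq_lagrangian {n q : ℕ} (f : EuclideanSpace ℝ (Fin n) → ℝ)
    (A : Matrix (Fin q) (Fin n) ℝ) (b lam : EuclideanSpace ℝ (Fin q))
    (x : EuclideanSpace ℝ (Fin n)) :
    f x + ∑ i, lam i * (A.mulVec x i - b i)
      = lagrangian f (Matrix.toEuclideanLin A).toContinuousLinearMap b lam x := by
  simp [lagrangian, PiLp.inner_apply, mul_comm]

theorem dual_function_strongly_concave_of_strongly_convex_general
    {n q : ℕ} (f : EuclideanSpace ℝ (Fin n) → ℝ)
    (f' : EuclideanSpace ℝ (Fin n) → EuclideanSpace ℝ (Fin n))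
    (hdiff : ∀ x, HasGradientAt f (f' x) x)
    (L : ℝ) (hL : 0 < L)
    (hLip : ∀ x y, ‖f' y - f' x‖ ≤ L * ‖y - x‖)
    (α : ℝ) (hα : 0 < α)
    (hsc : ∀ x y : EuclideanSpace ℝ (Fin n), ∀ t : ℝ, 0 ≤ t → t ≤ 1 →
      f (t • x + (1 - t) • y)
        ≤ t * f x + (1 - t) * f y - α * (t * (1 - t)) / 2 * ‖y - x‖ ^ 2)
    (A : Matrix (Fin q) (Fin n) ℝ)
    (b : EuclideanSpace ℝ (Fin q))
    (θ : EuclideanSpace ℝ (Fin q) → EReal)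
    (hθ : θ = fun lam => ⨅ x : EuclideanSpace ℝ (Fin n),
      ((f x + ∑ i, lam i * (A.mulVec x i - b i) : ℝ) : EReal)) :
    (∀ lam, θ lam ≠ ⊥ ∧ θ lam ≠ ⊤) ∧
    (∃ θ' : EuclideanSpace ℝ (Fin q) → EuclideanSpace ℝ (Fin q),
      ∀ lam, HasGradientAt (fun l => (θ l).toReal) (θ' lam) lam) ∧
    (∀ l1 l2 : EuclideanSpace ℝ (Fin q), ∀ t : ℝ, 0 ≤ t → t ≤ 1 →
      t * (θ l1).toReal + (1 - t) * (θ l2).toReal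
        + (α * lambdaMin (A * Aᵀ) (Matrix.isHermitian_mul_conjTranspose_self A) / L ^ 2)
          * (t * (1 - t)) / 2 * ‖l1 - l2‖ ^ 2
        ≤ (θ (t • l1 + (1 - t) • l2)).toReal) := by
  set T := (Matrix.toEuclideanLin A).toContinuousLinearMap
  have hconvex : StrongConvexOn univ α f := strongConvexOn_univ_of_forall hsc
  choose z hz using exists_forall_lagrangian_le (A := T) (b := b) hα hconvex hdiff
  have hθz : ∀ lam, θ lam = lagrangian f T b lam (z lam) := by
    intro lam
    simp only [hθ, sum_mul_mulVec_sub_eq_lagrangian]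
    exact le_antisymm (iInf_le _ _) (le_iInf fun x => EReal.coe_le_coe (hz lam x))
  simp_rw [hθz, EReal.toReal_coe]
  exact ⟨fun lam => ⟨EReal.coe_ne_bot _, EReal.coe_ne_top _⟩,
    ⟨fun lam => T (z lam) - b, hasGradientAt_lagrangian_min hα hconvex hdiff hz⟩,
    fun l1 l2 t ht₀ ht₁ => lagrangian_min_add_sq_norm_sub_le hα hconvex hdiff hLip hL hz
      (lambdaMin_mul_transpose_mul_sq_norm_le A) l1 l2 ht₀ ht₁⟩

/-- If `f` is differentiable with `L`-Lipschitz gradient and strongly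
convex with constant `α > 0`, and the rows of `A` are linearly independent, then
the dual function `θ` is finite-valued, differentiable, and strongly concave on
`ℝ^q` with constant `α·λ_min(AAᵀ)/L²` for the Euclidean norm. -/
theorem dual_function_strongly_concave_of_strongly_convex
    {n q : ℕ} (f : EuclideanSpace ℝ (Fin n) → ℝ)
    (f' : EuclideanSpace ℝ (Fin n) → EuclideanSpace ℝ (Fin n))
    (hdiff : ∀ x, HasGradientAt f (f' x) x)
    (L : ℝ) (hL : 0 < L)
    (hLip : ∀ x y, ‖f' y - f' x‖ ≤ L * ‖y - x‖)
    (α : ℝ) (hα : 0 < α)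
    (hsc : ∀ x y : EuclideanSpace ℝ (Fin n), ∀ t : ℝ, 0 ≤ t → t ≤ 1 →
      f (t • x + (1 - t) • y)
        ≤ t * f x + (1 - t) * f y - α * (t * (1 - t)) / 2 * ‖y - x‖ ^ 2)
    (A : Matrix (Fin q) (Fin n) ℝ)
    (hA : LinearIndependent ℝ A)
    (b : EuclideanSpace ℝ (Fin q))
    (θ : EuclideanSpace ℝ (Fin q) → EReal)
    (hθ : θ = fun lam => ⨅ x : EuclideanSpace ℝ (Fin n),
      ((f x + ∑ i, lam i * (A.mulVec x i - b i) : ℝ) : EReal)) :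
    (∀ lam, θ lam ≠ ⊥ ∧ θ lam ≠ ⊤) ∧
    (∃ θ' : EuclideanSpace ℝ (Fin q) → EuclideanSpace ℝ (Fin q),
      ∀ lam, HasGradientAt (fun l => (θ l).toReal) (θ' lam) lam) ∧
    (∀ l1 l2 : EuclideanSpace ℝ (Fin q), ∀ t : ℝ, 0 ≤ t → t ≤ 1 →
      t * (θ l1).toReal + (1 - t) * (θ l2).toReal
        + (α * lambdaMin (A * Aᵀ) (Matrix.isHermitian_mul_conjTranspose_self A) / L ^ 2)
          * (t * (1 - t)) / 2 * ‖l1 - l2‖ ^ 2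
        ≤ (θ (t • l1 + (1 - t) • l2)).toReal) :=
  dual_function_strongly_concave_of_strongly_convex_general f f' hdiff L hL hLip α hα hsc A b θ hθ
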